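/- Let Ω ⊂ ℝ^d be a nonempty compact convex set, let μ_src and μ_tgt be Borel probability measures supported in Ω, and let H ∈ ℕ. Suppose V⋆ = (V⋆_0,…,V⋆_{H+1}) is feasible for the dynamic dual LP on Ω with horizon H and its objective ∫V⋆_0 dμ_src − ∫V⋆_{H+1} dμ_tgt is greater than or equal to the objective of every feasible family (i.e. V⋆ is optimal). Then the pair (V⋆_0, V⋆_{H+1}) is feasible for the static dual problem on Ω, and its objective ∫V⋆_0 dμ_src − ∫V⋆_{H+1} dμ_tgt is greater than or equal to the objective ∫W_0 dμ_src − ∫W_1 dμ_tgt of every pair (W_0, W_1) feasible for the static dual problem; in particular, the supremum of the dynamic dual objective over feasible families equals the supremum of the static dual objective over feasible pairs. -/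

import Mathlib

/-!
Chaining the `H + 1` dynamic constraints along the equally spaced points of the segment
`[x, y] ⊆ Ω` costs `(H + 1) / 2 · ‖(x - y) / (H + 1)‖²` per step, i.e. `½‖x - y‖²` in total, so
`(V₀, V_{H+1})` is statically feasible. Conversely, a static pair `(W₀, W₁)` is dominated by the
Hopf–Lax evolution of `W₁`, `W_h(x) = inf_{y ∈ Ω} ‖x - y‖² / (2 t_h) + W₁(y)` at the remaining times
`t_h = 1 - h / (H + 1)`: the inequality `‖u + v‖² / (s + t) ≤ ‖u‖² / s + ‖v‖² / t` makes it
dynamically feasible, it ends at `W₁`, and static feasibility says exactly that `W₀` lies below its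
first member on `Ω`. Optimality of `V` then bounds every static objective, and both suprema are
attained by `V`.
-/

open MeasureTheory

/-- Feasibility for the dynamic dual LP on `Ω` with horizon `H'`: the functions
`V_0,…,V_{H'+1}` are continuous on `Ω` and satisfy
`V_h(x) ≤ ((H'+1)/2)‖x−y‖² + V_{h+1}(y)` for all `h ≤ H'` and `x, y ∈ Ω`. -/
def DynDualFeasible {d : ℕ} (Ω : Set (EuclideanSpace ℝ (Fin d))) (H' : ℕ)
    (V : ℕ → EuclideanSpace ℝ (Fin d) → ℝ) : Prop :=
  (∀ h ≤ H' + 1, ContinuousOn (V h) Ω) ∧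
  ∀ h ≤ H', ∀ x ∈ Ω, ∀ y ∈ Ω,
    V h x ≤ ((H' : ℝ) + 1) / 2 * ‖x - y‖ ^ 2 + V (h + 1) y

/-- Feasibility for the static dual problem on `Ω`: `W_0, W_1` are continuous on `Ω` and
`W_0(x) ≤ ½‖x−y‖² + W_1(y)` for all `x, y ∈ Ω`. -/
def StaticDualFeasible {d : ℕ} (Ω : Set (EuclideanSpace ℝ (Fin d)))
    (W₀ W₁ : EuclideanSpace ℝ (Fin d) → ℝ) : Prop :=
  ContinuousOn W₀ Ω ∧ ContinuousOn W₁ Ω ∧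
  ∀ x ∈ Ω, ∀ y ∈ Ω, W₀ x ≤ 1 / 2 * ‖x - y‖ ^ 2 + W₁ y

section HopfLax

variable {E : Type*} [SeminormedAddCommGroup E] {Ω : Set E} {g : E → ℝ} {t : ℝ}

noncomputable def hopfLax (Ω : Set E) (g : E → ℝ) (t : ℝ) (x : E) : ℝ :=
  ⨅ y : Ω, ‖x - y‖ ^ 2 / (2 * t) + g y

theorem exists_isMinOn_hopfLax (hΩ : IsCompact Ω) (hne : Ω.Nonempty) (hg : ContinuousOn g Ω)
    (t : ℝ) (x : E) :
    ∃ z ∈ Ω, IsMinOn (fun y => ‖x - y‖ ^ 2 / (2 * t) + g y) Ω z ∧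
      hopfLax Ω g t x = ‖x - z‖ ^ 2 / (2 * t) + g z := by
  have hf : ContinuousOn (fun y => ‖x - y‖ ^ 2 / (2 * t) + g y) Ω :=
    (((continuous_const.sub continuous_id).norm.pow 2).div_const _).continuousOn.add hg
  obtain ⟨z, hz, hmin⟩ := hΩ.exists_isMinOn hne hf
  exact ⟨z, hz, hmin, hmin.iInf_eq hz⟩

theorem hopfLax_le (hΩ : IsCompact Ω) (hg : ContinuousOn g Ω) (x : E) {y : E} (hy : y ∈ Ω) :
    hopfLax Ω g t x ≤ ‖x - y‖ ^ 2 / (2 * t) + g y := by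
  obtain ⟨z, -, hmin, heq⟩ := exists_isMinOn_hopfLax hΩ ⟨y, hy⟩ hg t x
  exact heq ▸ hmin hy

theorem le_hopfLax (hΩ : IsCompact Ω) (hne : Ω.Nonempty) (hg : ContinuousOn g Ω) {x : E} {w : ℝ}
    (hw : ∀ y ∈ Ω, w ≤ ‖x - y‖ ^ 2 / (2 * t) + g y) : w ≤ hopfLax Ω g t x := by
  obtain ⟨z, hz, -, heq⟩ := exists_isMinOn_hopfLax hΩ hne hg t x
  exact heq ▸ hw z hz

theorem continuous_hopfLax (hΩ : IsCompact Ω) (hg : ContinuousOn g Ω) (t : ℝ) :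
    Continuous (hopfLax Ω g t) := by
  have : CompactSpace Ω := isCompact_iff_compactSpace.mp hΩ
  refine (isCompact_univ.continuous_sInf
    (f := fun (x : E) (y : Ω) => ‖x - y‖ ^ 2 / (2 * t) + g y) ?_).congr fun x => ?_
  · exact (((continuous_fst.sub (continuous_subtype_val.comp continuous_snd)).norm.pow 2).div_const
      _).add ((continuousOn_iff_continuous_domRestrict.mp hg).comp continuous_snd)
  · rw [Set.image_univ]
    rfl

theorem add_sq_div_add_le {a b s t : ℝ} (hs : 0 < s) (ht : 0 < t) :
    (a + b) ^ 2 / (s + t) ≤ a ^ 2 / s + b ^ 2 / t := by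
  rw [div_add_div _ _ hs.ne' ht.ne', div_le_div_iff₀ (by positivity) (by positivity)]
  nlinarith [sq_nonneg (t * a - s * b)]

theorem hopfLax_add_le (hΩ : IsCompact Ω) (hg : ContinuousOn g Ω) {s : ℝ} (hs : 0 < s)
    (ht : 0 < t) (x : E) {y : E} (hy : y ∈ Ω) :
    hopfLax Ω g (s + t) x ≤ ‖x - y‖ ^ 2 / (2 * s) + hopfLax Ω g t y := by
  obtain ⟨z, hz, -, heq⟩ := exists_isMinOn_hopfLax hΩ ⟨y, hy⟩ hg t y
  have hsplit : ‖x - z‖ ^ 2 / (2 * (s + t)) ≤ ‖x - y‖ ^ 2 / (2 * s) + ‖y - z‖ ^ 2 / (2 * t) :=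
    calc ‖x - z‖ ^ 2 / (2 * (s + t))
        ≤ (‖x - y‖ + ‖y - z‖) ^ 2 / (2 * s + 2 * t) := by
          rw [mul_add]
          gcongr
          exact norm_sub_le_norm_sub_add_norm_sub x y z
      _ ≤ ‖x - y‖ ^ 2 / (2 * s) + ‖y - z‖ ^ 2 / (2 * t) :=
          add_sq_div_add_le (by positivity) (by positivity)
  calc hopfLax Ω g (s + t) x ≤ ‖x - z‖ ^ 2 / (2 * (s + t)) + g z := hopfLax_le hΩ hg x hz
    _ ≤ ‖x - y‖ ^ 2 / (2 * s) + hopfLax Ω g t y := by rw [heq]; linarith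

end HopfLax

section Chain

variable {E : Type*} [NormedAddCommGroup E] [NormedSpace ℝ E] {Ω : Set E}

theorem le_div_mul_sq_norm_add_of_chain (hΩ : Convex ℝ Ω) {n : ℕ} (hn : 0 < n) {c : ℝ}
    {f : ℕ → E → ℝ} (hf : ∀ k < n, ∀ x ∈ Ω, ∀ y ∈ Ω, f k x ≤ c * ‖x - y‖ ^ 2 + f (k + 1) y)
    {x y : E} (hx : x ∈ Ω) (hy : y ∈ Ω) :
    f 0 x ≤ c / n * ‖x - y‖ ^ 2 + f n y := by
  have hn' : (0 : ℝ) < n := by exact_mod_cast hn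
  set p : ℕ → E := fun k => AffineMap.lineMap x y ((k : ℝ) / n) with hp
  have hp_mem : ∀ k ≤ n, p k ∈ Ω := fun k hk =>
    hΩ.lineMap_mem hx hy ⟨by positivity, div_le_one_of_le₀ (by exact_mod_cast hk) hn'.le⟩
  have hp_step : ∀ k, ‖p k - p (k + 1)‖ = ‖x - y‖ / n := by
    intro k
    rw [← dist_eq_norm, ← dist_eq_norm, hp, dist_lineMap_lineMap, Real.dist_eq,
      show (k : ℝ) / n - ((k + 1 : ℕ) : ℝ) / n = -(1 / n) by push_cast; ring, abs_neg,
      abs_of_pos (by positivity)]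
    ring
  have hchain : ∀ k ≤ n, f 0 x ≤ k * (c * (‖x - y‖ / n) ^ 2) + f k (p k) := by
    intro k hk
    induction k with
    | zero => simp [p]
    | succ k ih =>
      have hlink := hf k hk (p k) (hp_mem k (by omega)) (p (k + 1)) (hp_mem (k + 1) hk)
      rw [hp_step] at hlink
      push_cast
      linarith [ih (by omega)]
  have hend : p n = y := by simp [p, div_self hn'.ne']
  have hcost : (n : ℝ) * (c * (‖x - y‖ / n) ^ 2) = c / n * ‖x - y‖ ^ 2 := by field_simp
  simpa only [hend, hcost] using hchain n le_rfl

end Chain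

theorem DynDualFeasible.staticDualFeasible {d : ℕ} {Ω : Set (EuclideanSpace ℝ (Fin d))}
    (hΩ : Convex ℝ Ω) {H : ℕ} {V : ℕ → EuclideanSpace ℝ (Fin d) → ℝ}
    (hV : DynDualFeasible Ω H V) : StaticDualFeasible Ω (V 0) (V (H + 1)) := by
  refine ⟨hV.1 0 (by omega), hV.1 (H + 1) le_rfl, fun x hx y hy => ?_⟩
  have h := le_div_mul_sq_norm_add_of_chain hΩ H.succ_pos
    (fun k hk => hV.2 k (Nat.lt_succ_iff.mp hk)) hx hy
  have hcost : ((H : ℝ) + 1) / 2 / ((H + 1 : ℕ) : ℝ) = 1 / 2 := by push_cast; field_simp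
  rwa [hcost] at h

section HopfLaxFamily

variable {E : Type*} [SeminormedAddCommGroup E] {Ω : Set E} {g : E → ℝ}

-- At remaining time `0` the Hopf–Lax formula would divide by zero, so the last member is `g`.
noncomputable def hopfLaxFamily (Ω : Set E) (g : E → ℝ) (H h : ℕ) : E → ℝ :=
  if h ≤ H then hopfLax Ω g (((H : ℝ) + 1 - h) / (H + 1)) else g

theorem hopfLaxFamily_zero (H : ℕ) : hopfLaxFamily Ω g H 0 = hopfLax Ω g 1 := by
  have : ((H : ℝ) + 1) ≠ 0 := by positivity
  simp [hopfLaxFamily, div_self this]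

theorem hopfLaxFamily_succ_self (H : ℕ) : hopfLaxFamily Ω g H (H + 1) = g := by
  simp [hopfLaxFamily]

theorem continuousOn_hopfLaxFamily (hΩ : IsCompact Ω) (hg : ContinuousOn g Ω) (H h : ℕ) :
    ContinuousOn (hopfLaxFamily Ω g H h) Ω := by
  unfold hopfLaxFamily
  split_ifs
  · exact (continuous_hopfLax hΩ hg _).continuousOn
  · exact hg

theorem hopfLaxFamily_le (hΩ : IsCompact Ω) (hg : ContinuousOn g Ω) {H h : ℕ} (hh : h ≤ H)
    (x : E) {y : E} (hy : y ∈ Ω) :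
    hopfLaxFamily Ω g H h x ≤ ((H : ℝ) + 1) / 2 * ‖x - y‖ ^ 2 + hopfLaxFamily Ω g H (h + 1) y := by
  have hcost : ((H : ℝ) + 1) / 2 * ‖x - y‖ ^ 2 = ‖x - y‖ ^ 2 / (2 * (1 / (H + 1))) := by
    field_simp
  rw [hcost]
  rcases hh.lt_or_eq with hlt | rfl
  · have htime : ((H : ℝ) + 1 - h) / (H + 1) =
        1 / (H + 1) + ((H : ℝ) + 1 - (h + 1 : ℕ)) / (H + 1) := by
      push_cast; ring
    have hpos : 0 < ((H : ℝ) + 1 - (h + 1 : ℕ)) / (H + 1) := by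
      have : ((h + 1 : ℕ) : ℝ) ≤ H := by exact_mod_cast hlt
      exact div_pos (by linarith) (by positivity)
    simp only [hopfLaxFamily, if_pos hh, if_pos (Nat.succ_le_of_lt hlt)]
    rw [htime]
    exact hopfLax_add_le hΩ hg (by positivity) hpos x hy
  · simp only [hopfLaxFamily, le_refl, if_true, if_neg (Nat.not_succ_le_self h)]
    rw [show ((h : ℝ) + 1 - h) / (h + 1) = 1 / (h + 1) by ring]
    exact hopfLax_le hΩ hg x hy

end HopfLaxFamily

theorem dynDualFeasible_hopfLaxFamily {d : ℕ} {Ω : Set (EuclideanSpace ℝ (Fin d))}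
    (hΩ : IsCompact Ω) {g : EuclideanSpace ℝ (Fin d) → ℝ} (hg : ContinuousOn g Ω) (H : ℕ) :
    DynDualFeasible Ω H (hopfLaxFamily Ω g H) :=
  ⟨fun h _ => continuousOn_hopfLaxFamily hΩ hg H h,
    fun _ hh x _ _ hy => hopfLaxFamily_le hΩ hg hh x hy⟩

theorem StaticDualFeasible.le_hopfLax_one {d : ℕ} {Ω : Set (EuclideanSpace ℝ (Fin d))}
    (hΩ : IsCompact Ω) {W₀ W₁ : EuclideanSpace ℝ (Fin d) → ℝ} (hW : StaticDualFeasible Ω W₀ W₁)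
    {x : EuclideanSpace ℝ (Fin d)} (hx : x ∈ Ω) : W₀ x ≤ hopfLax Ω W₁ 1 x :=
  le_hopfLax hΩ ⟨x, hx⟩ hW.2.1 fun y hy => by
    convert hW.2.2 x hx y hy using 2
    ring

theorem integral_mono_of_le_on_compact {X : Type*} [TopologicalSpace X] [T2Space X]
    [MeasurableSpace X] [OpensMeasurableSpace X] {μ : Measure X} [IsFiniteMeasureOnCompacts μ]
    {K : Set X} (hK : IsCompact K) (hμ : μ Kᶜ = 0) {f g : X → ℝ} (hf : ContinuousOn f K)
    (hg : ContinuousOn g K) (hfg : ∀ x ∈ K, f x ≤ g x) : ∫ x, f x ∂μ ≤ ∫ x, g x ∂μ := by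
  rw [← Measure.restrict_eq_self_of_ae_mem (mem_ae_iff.mpr hμ)]
  exact setIntegral_mono_on (hf.integrableOn_compact hK) (hg.integrableOn_compact hK)
    hK.measurableSet hfg

theorem stmt10_general {d : ℕ} (Ω : Set (EuclideanSpace ℝ (Fin d)))
    (hcomp : IsCompact Ω) (hconv : Convex ℝ Ω)
    (μsrc μtgt : Measure (EuclideanSpace ℝ (Fin d)))
    [IsProbabilityMeasure μsrc]
    (hsrc : μsrc Ωᶜ = 0) (H : ℕ)
    (V : ℕ → EuclideanSpace ℝ (Fin d) → ℝ)
    (hVfeas : DynDualFeasible Ω H V)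
    (hVopt : ∀ W : ℕ → EuclideanSpace ℝ (Fin d) → ℝ, DynDualFeasible Ω H W →
      ∫ x, W 0 x ∂μsrc - ∫ x, W (H + 1) x ∂μtgt ≤
        ∫ x, V 0 x ∂μsrc - ∫ x, V (H + 1) x ∂μtgt) :
    StaticDualFeasible Ω (V 0) (V (H + 1)) ∧
    (∀ W₀ W₁, StaticDualFeasible Ω W₀ W₁ →
      ∫ x, W₀ x ∂μsrc - ∫ x, W₁ x ∂μtgt ≤
        ∫ x, V 0 x ∂μsrc - ∫ x, V (H + 1) x ∂μtgt) ∧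
    sSup {r : ℝ | ∃ W : ℕ → EuclideanSpace ℝ (Fin d) → ℝ, DynDualFeasible Ω H W ∧
        r = ∫ x, W 0 x ∂μsrc - ∫ x, W (H + 1) x ∂μtgt} =
      sSup {r : ℝ | ∃ W₀ W₁, StaticDualFeasible Ω W₀ W₁ ∧
        r = ∫ x, W₀ x ∂μsrc - ∫ x, W₁ x ∂μtgt} := by
  have hstatic := hVfeas.staticDualFeasible hconv
  have hdom : ∀ W₀ W₁, StaticDualFeasible Ω W₀ W₁ →
      ∫ x, W₀ x ∂μsrc - ∫ x, W₁ x ∂μtgt ≤ ∫ x, V 0 x ∂μsrc - ∫ x, V (H + 1) x ∂μtgt := by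
    intro W₀ W₁ hW
    have hfeas := dynDualFeasible_hopfLaxFamily hcomp hW.2.1 H
    have hmono : ∫ x, W₀ x ∂μsrc ≤ ∫ x, hopfLaxFamily Ω W₁ H 0 x ∂μsrc :=
      integral_mono_of_le_on_compact hcomp hsrc hW.1 (hfeas.1 0 (by omega)) fun x hx =>
        hopfLaxFamily_zero (Ω := Ω) (g := W₁) H ▸ hW.le_hopfLax_one hcomp hx
    have hopt := hVopt _ hfeas
    rw [hopfLaxFamily_succ_self] at hopt
    linarith
  refine ⟨hstatic, hdom, ?_⟩
  refine (IsGreatest.csSup_eq (a := ∫ x, V 0 x ∂μsrc - ∫ x, V (H + 1) x ∂μtgt) ?_).trans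
    (IsGreatest.csSup_eq ?_).symm
  · exact ⟨⟨V, hVfeas, rfl⟩, by rintro _ ⟨W, hW, rfl⟩; exact hVopt W hW⟩
  · exact ⟨⟨V 0, V (H + 1), hstatic, rfl⟩, by rintro _ ⟨W₀, W₁, hW, rfl⟩; exact hdom W₀ W₁ hW⟩

/-- an optimal solution `V⋆` of the dynamic dual LP yields, via its first and
last components, a feasible pair for the static dual whose objective dominates all static
feasible pairs; in particular the two optimal dual values coincide. -/
theorem stmt10 {d : ℕ} (Ω : Set (EuclideanSpace ℝ (Fin d)))
    (hne : Ω.Nonempty) (hcomp : IsCompact Ω) (hconv : Convex ℝ Ω)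
    (μsrc μtgt : Measure (EuclideanSpace ℝ (Fin d)))
    [IsProbabilityMeasure μsrc] [IsProbabilityMeasure μtgt]
    (hsrc : μsrc Ωᶜ = 0) (htgt : μtgt Ωᶜ = 0) (H : ℕ)
    (V : ℕ → EuclideanSpace ℝ (Fin d) → ℝ)
    (hVfeas : DynDualFeasible Ω H V)
    (hVopt : ∀ W : ℕ → EuclideanSpace ℝ (Fin d) → ℝ, DynDualFeasible Ω H W →
      ∫ x, W 0 x ∂μsrc - ∫ x, W (H + 1) x ∂μtgt ≤
        ∫ x, V 0 x ∂μsrc - ∫ x, V (H + 1) x ∂μtgt) :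
    StaticDualFeasible Ω (V 0) (V (H + 1)) ∧
    (∀ W₀ W₁, StaticDualFeasible Ω W₀ W₁ →
      ∫ x, W₀ x ∂μsrc - ∫ x, W₁ x ∂μtgt ≤
        ∫ x, V 0 x ∂μsrc - ∫ x, V (H + 1) x ∂μtgt) ∧
    sSup {r : ℝ | ∃ W : ℕ → EuclideanSpace ℝ (Fin d) → ℝ, DynDualFeasible Ω H W ∧
        r = ∫ x, W 0 x ∂μsrc - ∫ x, W (H + 1) x ∂μtgt} =
      sSup {r : ℝ | ∃ W₀ W₁, StaticDualFeasible Ω W₀ W₁ ∧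
        r = ∫ x, W₀ x ∂μsrc - ∫ x, W₁ x ∂μtgt} :=
  stmt10_general Ω hcomp hconv μsrc μtgt hsrc H V hVfeas hVopt
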